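/- Let E₁ and E₂ be directed graphs with free path groupoids G₁ = G(E₁) and G₂ = G(E₂), and let h : Arr(G₁) → Arr(G₂) be a groupoid homomorphism whose restriction to W₁ := W(E₁) is injective and which satisfies h(W₁) = W₂ := W(E₂). Then h : Arr(G₁) → Arr(G₂) is bijective. -/

import Mathlib

open CategoryTheory

universe u v u' v'

/-- The set of arrows of a groupoid. -/
abbrev Arr (C : Type u) [Groupoid.{v} C] : Type (max u v) := Σ (x y : C), x ⟶ y

/-- Two arrows `g₁ : x ⟶ y` and `g₂ : z ⟶ w` are composable if `y = z`. -/
def Arr.Composable {C : Type u} [Groupoid.{v} C] (g₁ g₂ : Arr C) : Prop := g₁.2.1 = g₂.1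

/-- Composition of composable arrows. -/
def Arr.comp {C : Type u} [Groupoid.{v} C] (g₁ g₂ : Arr C) (h : g₁.Composable g₂) : Arr C :=
  ⟨g₁.1, g₂.2.1, g₁.2.2 ≫ eqToHom h ≫ g₂.2.2⟩

/-- The identity arrow at an object. -/
def idArr {C : Type u} [Groupoid.{v} C] (x : C) : Arr C := ⟨x, x, 𝟙 x⟩

/-- Inverse of an arrow. -/
def Arr.inv {C : Type u} [Groupoid.{v} C] (g : Arr C) : Arr C :=
  ⟨g.2.1, g.1, Groupoid.inv g.2.2⟩

/-- A groupoid homomorphism, as a map on arrows preserving composability and composition. -/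
def IsGroupoidHom {C : Type u} {D : Type u'} [Groupoid.{v} C] [Groupoid.{v'} D]
    (h : Arr C → Arr D) : Prop :=
  ∀ g₁ g₂ : Arr C, ∀ hc : g₁.Composable g₂,
    ∃ hc' : (h g₁).Composable (h g₂), h (g₁.comp g₂ hc) = (h g₁).comp (h g₂) hc'

/-- The arrow of the free groupoid associated to a path in the quiver `V`;
this is the image of `p` under the canonical functor `Paths V ⥤ FreeGroupoid V`
extending the inclusion of `V`. -/
def pathArrow (V : Type u) [Quiver.{v + 1} V] {x y : V} (p : Quiver.Path x y) :
    Arr (Quiver.FreeGroupoid V) :=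
  ⟨(Quiver.FreeGroupoid.of V).obj x, (Quiver.FreeGroupoid.of V).obj y,
    composePath ((Quiver.FreeGroupoid.of V).mapPath p)⟩

/-- The set `W(E)` of arrows of `FreeGroupoid V` that are images of finite paths of `V`. -/
def WSet (V : Type u) [Quiver.{v + 1} V] : Set (Arr (Quiver.FreeGroupoid V)) :=
  {a | ∃ (x y : V) (p : Quiver.Path x y), a = pathArrow V p}

/-!
A groupoid homomorphism `h` is the arrow map of a functor `H : G₁ ⥤ G₂`. Choosing for every edge
`e` of `E₂` an arrow of `W₁` over `⟦e⟧`, the universal property of the free groupoid gives a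
functor `F : G₂ ⥤ G₁` with `F ⋙ H = 𝟭`, checked on generators. As `F` sends edges into `W₁`,
which is closed under composition, `F` maps `W₂` into `W₁`. So for `w ∈ W₁` both `F (h w)` and `w`
lie in `W₁` and have the same image under `h`, and injectivity of `h` on `W₁` gives
`F (h w) = w`. Vertices and edges lie in `W₁`, hence `H ⋙ F = 𝟭`.
-/

namespace Arr

variable {C : Type u} [Groupoid.{v} C]

theorem mk_eq_mk_iff {x y : C} {f g : x ⟶ y} : (⟨x, y, f⟩ : Arr C) = ⟨x, y, g⟩ ↔ f = g := by
  simp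

theorem mk_eqToHom (a : Arr C) {x y : C} (hx : x = a.1) (hy : a.2.1 = y) :
    (⟨x, y, eqToHom hx ≫ a.2.2 ≫ eqToHom hy⟩ : Arr C) = a := by
  obtain ⟨x', y', f⟩ := a
  dsimp only at hx hy
  subst hx hy
  simp

theorem comp_mk {x y z : C} (f : x ⟶ y) (g : y ⟶ z) :
    Arr.comp ⟨x, y, f⟩ ⟨y, z, g⟩ rfl = ⟨x, z, f ≫ g⟩ := by
  simp [Arr.comp]

theorem comp_congr {a a' b b' : Arr C} (ha : a = a') (hb : b = b') (hc : a.Composable b) :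
    a.comp b hc = a'.comp b' (ha ▸ hb ▸ hc) := by
  subst ha hb
  rfl

theorem idArr_comp_idArr (x : C) : (idArr x).comp (idArr x) rfl = idArr x :=
  comp_mk _ _ |>.trans (by simp [idArr])

theorem eq_idArr_of_comp_self {a : Arr C} (hc : a.Composable a) (e : a.comp a hc = a) :
    a = idArr a.1 := by
  obtain ⟨x, y, f⟩ := a
  obtain rfl : y = x := hc
  rw [comp_mk, mk_eq_mk_iff] at e
  exact mk_eq_mk_iff.2 <| (cancel_epi f).1 (e.trans (Category.comp_id f).symm)

end Arr

theorem Prefunctor.ext_arr {W : Type*} [Quiver W] {C : Type u} [Groupoid.{v} C] {P Q : W ⥤q C}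
    (h_obj : ∀ x, P.obj x = Q.obj x)
    (h_map : ∀ {x y : W} (e : x ⟶ y), (⟨_, _, P.map e⟩ : Arr C) = ⟨_, _, Q.map e⟩) : P = Q := by
  obtain ⟨Po, Pm⟩ := P
  obtain ⟨Qo, Qm⟩ := Q
  obtain rfl : Po = Qo := funext h_obj
  congr
  funext x y e
  exact Arr.mk_eq_mk_iff.1 (h_map e)

namespace CategoryTheory.Functor

variable {C : Type u} {D : Type u'} {E : Type*} [Groupoid.{v} C] [Groupoid.{v'} D] [Groupoid E]

def mapArr (F : C ⥤ D) (a : Arr C) : Arr D := ⟨F.obj a.1, F.obj a.2.1, F.map a.2.2⟩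

theorem comp_mapArr (F : C ⥤ D) (G : D ⥤ E) : (F ⋙ G).mapArr = G.mapArr ∘ F.mapArr := rfl

theorem mapArr_idArr (F : C ⥤ D) (x : C) : F.mapArr (idArr x) = idArr (F.obj x) := by
  simp [mapArr, idArr]

theorem mapArr_comp (F : C ⥤ D) (a b : Arr C) (hc : a.Composable b) :
    F.mapArr (a.comp b hc) = (F.mapArr a).comp (F.mapArr b) (congrArg F.obj hc) := by
  obtain ⟨x, y, f⟩ := a
  obtain ⟨y', z, g⟩ := b
  obtain rfl : y = y' := hc
  rw [Arr.comp_mk]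
  simp only [mapArr, map_comp, Arr.comp_mk]

theorem mapArr_bijective {F : C ⥤ D} {G : D ⥤ C} (hFG : F ⋙ G = 𝟭 C) (hGF : G ⋙ F = 𝟭 D) :
    Function.Bijective F.mapArr :=
  Function.bijective_iff_has_inverse.2
    ⟨G.mapArr, congrFun (congrArg mapArr hFG), congrFun (congrArg mapArr hGF)⟩

end CategoryTheory.Functor

namespace IsGroupoidHom

variable {C : Type u} {D : Type u'} [Groupoid.{v} C] [Groupoid.{v'} D] {h : Arr C → Arr D}
  (hh : IsGroupoidHom h)
include hh

theorem map_idArr (x : C) : h (idArr x) = idArr (h (idArr x)).1 := by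
  obtain ⟨hc, e⟩ := hh (idArr x) (idArr x) rfl
  rw [Arr.idArr_comp_idArr] at e
  exact Arr.eq_idArr_of_comp_self hc e.symm

theorem fst_map (g : Arr C) : (h g).1 = (h (idArr g.1)).1 := by
  obtain ⟨hc, _⟩ := hh (idArr g.1) g rfl
  rw [hh.map_idArr] at hc
  exact hc.symm

theorem snd_fst_map (g : Arr C) : (h g).2.1 = (h (idArr g.2.1)).1 :=
  (hh g (idArr g.2.1) rfl).1

def prefunctor : C ⥤q D where
  obj x := (h (idArr x)).1
  map {x y} f := eqToHom (hh.fst_map ⟨x, y, f⟩).symm ≫ (h ⟨x, y, f⟩).2.2 ≫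
    eqToHom (hh.snd_fst_map ⟨x, y, f⟩)

theorem mk_prefunctor_map {x y : C} (f : x ⟶ y) :
    (⟨_, _, hh.prefunctor.map f⟩ : Arr D) = h ⟨x, y, f⟩ :=
  Arr.mk_eqToHom _ _ _

def functor : C ⥤ D where
  __ := hh.prefunctor
  map_id x := Arr.mk_eq_mk_iff.1 <| (hh.mk_prefunctor_map (𝟙 x)).trans (hh.map_idArr x)
  map_comp {x y z} f g := Arr.mk_eq_mk_iff.1 <| by
    obtain ⟨hc, e⟩ := hh ⟨x, y, f⟩ ⟨y, z, g⟩ rfl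
    calc (⟨_, _, hh.prefunctor.map (f ≫ g)⟩ : Arr D)
        = h (Arr.comp ⟨x, y, f⟩ ⟨y, z, g⟩ rfl) := by rw [mk_prefunctor_map, Arr.comp_mk]
      _ = (h ⟨x, y, f⟩).comp (h ⟨y, z, g⟩) hc := e
      _ = Arr.comp ⟨_, _, hh.prefunctor.map f⟩ ⟨_, _, hh.prefunctor.map g⟩ rfl :=
        Arr.comp_congr (hh.mk_prefunctor_map f).symm (hh.mk_prefunctor_map g).symm hc
      _ = _ := Arr.comp_mk _ _

theorem mapArr_functor : hh.functor.mapArr = h :=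
  funext fun _ => hh.mk_prefunctor_map _

theorem functor_obj_injective (hinj : Set.InjOn h (Set.range idArr)) :
    Function.Injective hh.functor.obj := fun x y e =>
  congrArg Sigma.fst <| hinj ⟨x, rfl⟩ ⟨y, rfl⟩ <| by
    rw [hh.map_idArr x, hh.map_idArr y]
    exact congrArg idArr e

theorem functor_obj_surjective (hsurj : Set.range idArr ⊆ Set.range h) :
    Function.Surjective hh.functor.obj := fun z => by
  obtain ⟨a, ha⟩ := hsurj ⟨z, rfl⟩
  exact ⟨a.1, (hh.fst_map a).symm.trans (congrArg Sigma.fst ha)⟩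

end IsGroupoidHom

namespace Quiver.FreeGroupoid

variable {V : Type u} [Quiver.{v + 1} V]

theorem of_obj_surjective : Function.Surjective (of V).obj :=
  fun z => ⟨z.as, rfl⟩

theorem of_obj_injective : Function.Injective (of V).obj :=
  fun _ _ e => congrArg (CategoryTheory.Quotient.as (r := redStep)) e

theorem idArr_mem_WSet (z : Quiver.FreeGroupoid V) : idArr z ∈ WSet V := by
  obtain ⟨x, rfl⟩ := of_obj_surjective z
  exact ⟨x, x, .nil, rfl⟩

theorem pathArrow_toPath {x y : V} (e : x ⟶ y) :
    pathArrow V e.toPath = ⟨(of V).obj x, (of V).obj y, (of V).map e⟩ := by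
  simp [pathArrow]

theorem pathArrow_comp {x y z : V} (p : Path x y) (q : Path y z)
    (hc : (pathArrow V p).Composable (pathArrow V q)) :
    pathArrow V (p.comp q) = (pathArrow V p).comp (pathArrow V q) hc := by
  simp [pathArrow, Arr.comp_mk]

theorem comp_mem_WSet {a b : Arr (Quiver.FreeGroupoid V)} (ha : a ∈ WSet V) (hb : b ∈ WSet V)
    (hc : a.Composable b) : a.comp b hc ∈ WSet V := by
  obtain ⟨x, y, p, rfl⟩ := ha
  obtain ⟨y', z, q, rfl⟩ := hb
  obtain rfl : y = y' := of_obj_injective hc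
  exact ⟨x, z, p.comp q, (pathArrow_comp p q hc).symm⟩

theorem _root_.CategoryTheory.Functor.mapArr_mem_WSet {V' : Type u'} [Quiver.{v' + 1} V']
    {F : Quiver.FreeGroupoid V ⥤ Quiver.FreeGroupoid V'}
    (hF : ∀ {x y : V} (e : x ⟶ y), F.mapArr (pathArrow V e.toPath) ∈ WSet V')
    {a : Arr (Quiver.FreeGroupoid V)} (ha : a ∈ WSet V) : F.mapArr a ∈ WSet V' := by
  obtain ⟨x, y, p, rfl⟩ := ha
  induction p with
  | nil => exact F.mapArr_idArr _ ▸ idArr_mem_WSet _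
  | cons p e ih =>
    have hc : (pathArrow V p).Composable (pathArrow V e.toPath) := rfl
    rw [← Path.comp_toPath_eq_cons, pathArrow_comp p _ hc, F.mapArr_comp _ _ hc]
    exact comp_mem_WSet ih (hF e) _

theorem mapArr_lift_pathArrow_toPath {C : Type*} [Groupoid C] (ψ : V ⥤q C) {x y : V}
    (e : x ⟶ y) : (lift ψ).mapArr (pathArrow V e.toPath) = ⟨ψ.obj x, ψ.obj y, ψ.map e⟩ := by
  rw [pathArrow_toPath]
  exact congrArg (fun Φ : V ⥤q C => (⟨Φ.obj x, Φ.obj y, Φ.map e⟩ : Arr C)) (lift_spec ψ)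

theorem functor_ext {C : Type*} [Groupoid C] {F G : Quiver.FreeGroupoid V ⥤ C}
    (h_obj : ∀ x, F.obj ((of V).obj x) = G.obj ((of V).obj x))
    (h_map : ∀ {x y : V} (e : x ⟶ y),
      F.mapArr (pathArrow V e.toPath) = G.mapArr (pathArrow V e.toPath)) : F = G := by
  rw [lift_unique _ F rfl, lift_unique _ G rfl]
  congr 1
  refine Prefunctor.ext_arr h_obj fun e => ?_
  have := h_map e
  rwa [pathArrow_toPath] at this

end Quiver.FreeGroupoid

namespace IsGroupoidHom

variable {V₁ : Type u} [Quiver.{v + 1} V₁] {V₂ : Type u'} [Quiver.{v' + 1} V₂]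
  {h : Arr (Quiver.FreeGroupoid V₁) → Arr (Quiver.FreeGroupoid V₂)} (hh : IsGroupoidHom h)
  (hinj : Set.InjOn h (WSet V₁))
include hh hinj

open Quiver.FreeGroupoid

theorem exists_comp_functor_eq_id (himg : h '' WSet V₁ = WSet V₂) :
    ∃ F : Quiver.FreeGroupoid V₂ ⥤ Quiver.FreeGroupoid V₁, F ⋙ hh.functor = 𝟭 _ ∧
      ∀ {x y : V₂} (e : x ⟶ y), F.mapArr (pathArrow V₂ e.toPath) ∈ WSet V₁ := by
  have hsurj : Set.range idArr ⊆ Set.range h := by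
    rintro _ ⟨z, rfl⟩
    obtain ⟨a, -, ha⟩ := himg.symm ▸ idArr_mem_WSet z
    exact ⟨a, ha⟩
  let φ := Equiv.ofBijective _ ⟨hh.functor_obj_injective (hinj.mono
    (Set.range_subset_iff.2 idArr_mem_WSet)), hh.functor_obj_surjective hsurj⟩
  have hw : ∀ (x y : V₂) (e : x ⟶ y), ∃ w ∈ WSet V₁, h w = pathArrow V₂ e.toPath :=
    fun _ _ e => show _ ∈ h '' WSet V₁ from himg ▸ ⟨_, _, _, rfl⟩
  choose w hwW hwh using hw
  have hw_fst {x y : V₂} (e : x ⟶ y) : (w x y e).1 = φ.symm ((of V₂).obj x) :=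
    φ.eq_symm_apply.2 <| (hh.fst_map (w x y e)).symm.trans (congrArg Sigma.fst (hwh x y e))
  have hw_snd {x y : V₂} (e : x ⟶ y) : (w x y e).2.1 = φ.symm ((of V₂).obj y) :=
    φ.eq_symm_apply.2 <| (hh.snd_fst_map (w x y e)).symm.trans (congrArg (·.2.1) (hwh x y e))
  let ψ : V₂ ⥤q Quiver.FreeGroupoid V₁ :=
    { obj x := φ.symm ((of V₂).obj x)
      map {x y} e := eqToHom (hw_fst e).symm ≫ (w x y e).2.2 ≫ eqToHom (hw_snd e) }
  have hψ {x y : V₂} (e : x ⟶ y) : (lift ψ).mapArr (pathArrow V₂ e.toPath) = w x y e :=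
    (mapArr_lift_pathArrow_toPath ψ e).trans (Arr.mk_eqToHom _ _ _)
  refine ⟨lift ψ, functor_ext (fun x => φ.apply_symm_apply _) fun e => ?_,
    fun e => hψ e ▸ hwW _ _ e⟩
  rw [Functor.comp_mapArr, Function.comp_apply, hψ, mapArr_functor, hwh]
  rfl

theorem functor_comp_eq_id (hmaps : Set.MapsTo h (WSet V₁) (WSet V₂))
    {F : Quiver.FreeGroupoid V₂ ⥤ Quiver.FreeGroupoid V₁} (hFH : F ⋙ hh.functor = 𝟭 _)
    (hF : Set.MapsTo F.mapArr (WSet V₂) (WSet V₁)) : hh.functor ⋙ F = 𝟭 _ := by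
  have hFh : ∀ a ∈ WSet V₁, F.mapArr (h a) = a := fun a ha => by
    refine hinj (hF (hmaps ha)) ha ?_
    have := congrFun (congrArg Functor.mapArr hFH) (h a)
    rwa [Functor.comp_mapArr, hh.mapArr_functor] at this
  refine functor_ext (fun x => congrArg Sigma.fst (hFh _ (idArr_mem_WSet _))) fun e => ?_
  rw [Functor.comp_mapArr, Function.comp_apply, hh.mapArr_functor]
  exact hFh _ ⟨_, _, _, rfl⟩

end IsGroupoidHom

/-- A groupoid homomorphism between free path groupoids which is injective on `W(E₁)` and maps
`W(E₁)` onto `W(E₂)` is bijective. -/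
theorem groupoidHom_bijective
    (V₁ : Type u) [Quiver.{v + 1} V₁] (V₂ : Type u') [Quiver.{v' + 1} V₂]
    (h : Arr (Quiver.FreeGroupoid V₁) → Arr (Quiver.FreeGroupoid V₂)) (hhom : IsGroupoidHom h)
    (hinj : Set.InjOn h (WSet V₁)) (himg : h '' WSet V₁ = WSet V₂) :
    Function.Bijective h := by
  obtain ⟨F, hFH, hF⟩ := hhom.exists_comp_functor_eq_id hinj himg
  have hHF := hhom.functor_comp_eq_id hinj (himg ▸ Set.mapsTo_image h _) hFH
    fun _ => F.mapArr_mem_WSet hF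
  rw [← hhom.mapArr_functor]
  exact Functor.mapArr_bijective hHF hFH
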